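/- Let B be an n×n Hermitian positive definite complex matrix with diagonal normalization B̂ and potential Γ(B) = tr(B̂^{-1}) − n. Then max(‖B̂‖, ‖B̂^{-1}‖) ≤ 1 + Γ(B)/2 + √((1 + Γ(B)/2)² − 1), where ‖·‖ is the ℓ₂ operator norm. -/

import Mathlib

open Matrix
open scoped ComplexOrder

noncomputable section

/-- `D_B^{1/2}`: the diagonal matrix whose entries are the square roots of the
diagonal entries of `B`. -/
def sqrtDiag {n : ℕ} (B : Matrix (Fin n) (Fin n) ℂ) : Matrix (Fin n) (Fin n) ℂ :=
  Matrix.diagonal fun i => (Real.sqrt (B i i).re : ℂ)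

/-- The diagonal normalization `B̂ = D_B^{-1/2} B D_B^{-1/2}`. -/
def hatM {n : ℕ} (B : Matrix (Fin n) (Fin n) ℂ) : Matrix (Fin n) (Fin n) ℂ :=
  (sqrtDiag B)⁻¹ * B * (sqrtDiag B)⁻¹

/-- The potential function `Γ(B) = tr(B̂⁻¹) − n` (a real number for Hermitian
positive definite `B`). -/
def Gamma {n : ℕ} (B : Matrix (Fin n) (Fin n) ℂ) : ℝ :=
  (Matrix.trace ((hatM B)⁻¹)).re - n

/-- The `ℓ₂` operator norm of a matrix. -/
def opNorm {m n : ℕ} (M : Matrix (Fin m) (Fin n) ℂ) : ℝ :=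
  ‖LinearMap.toContinuousLinearMap (Matrix.toEuclideanLin M)‖

/-- The condition number `κ(M) = ‖M‖·‖M⁻¹‖` in the `ℓ₂` operator norm. -/
def kappa {n : ℕ} (M : Matrix (Fin n) (Fin n) ℂ) : ℝ :=
  opNorm M * opNorm M⁻¹

/-!
`B̂` is positive definite with unit diagonal, so its eigenvalues `λᵢ > 0` satisfy
`∑ λᵢ = tr B̂ = n` and `∑ λᵢ⁻¹ = tr B̂⁻¹ = n + Γ`. Hence `Γ = ∑ (λᵢ + λᵢ⁻¹ - 2)` is a sum of
nonnegative terms, so each `λᵢ + λᵢ⁻¹ ≤ 2t` with `t = 1 + Γ/2`, which bounds both `λᵢ` and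
`λᵢ⁻¹` by the larger root `t + √(t² - 1)` of `x + x⁻¹ = 2t`. Since `B̂` and `B̂⁻¹` are unitarily
diagonal, their `ℓ₂` norms are the largest `λᵢ` and the largest `λᵢ⁻¹`.
-/

open scoped Matrix.Norms.L2Operator

namespace Matrix

open Unitary

section Spectral

variable {𝕜 ι : Type*} [RCLike 𝕜] [Fintype ι] [DecidableEq ι]

lemma trace_conjStarAlgAut (U : unitary (Matrix ι ι 𝕜)) (A : Matrix ι ι 𝕜) :
    (conjStarAlgAut 𝕜 _ U A).trace = A.trace := by
  rw [conjStarAlgAut_apply, trace_mul_cycle, coe_star_mul_self, one_mul]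

lemma PosDef.inv_eq_conjStarAlgAut {A : Matrix ι ι 𝕜} (hA : A.PosDef) :
    A⁻¹ = conjStarAlgAut 𝕜 _ hA.1.eigenvectorUnitary
      (diagonal (RCLike.ofReal ∘ fun i => (hA.1.eigenvalues i)⁻¹)) := by
  refine inv_eq_left_inv ?_
  conv_lhs => enter [2]; rw [hA.1.spectral_theorem]
  rw [← map_mul, diagonal_mul_diagonal, ← map_one (conjStarAlgAut 𝕜 _ hA.1.eigenvectorUnitary),
    ← diagonal_one]
  congr 2
  funext i
  simp only [Function.comp_apply, ← RCLike.ofReal_mul, inv_mul_cancel₀ (hA.eigenvalues_pos i).ne',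
    RCLike.ofReal_one]

lemma PosDef.trace_inv {A : Matrix ι ι 𝕜} (hA : A.PosDef) :
    A⁻¹.trace = ∑ i, ((hA.1.eigenvalues i)⁻¹ : 𝕜) := by
  rw [hA.inv_eq_conjStarAlgAut, trace_conjStarAlgAut, trace_diagonal]
  simp

end Spectral

variable {n : ℕ}

lemma opNorm_eq_l2_opNorm {m : ℕ} (A : Matrix (Fin m) (Fin n) ℂ) : opNorm A = ‖A‖ := rfl

lemma opNorm_conjStarAlgAut_diagonal (U : unitary (Matrix (Fin n) (Fin n) ℂ)) (d : Fin n → ℝ) :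
    opNorm (conjStarAlgAut ℂ _ U (diagonal (RCLike.ofReal ∘ d))) = ‖d‖ := by
  rw [opNorm_eq_l2_opNorm, conjStarAlgAut_apply, ← coe_star,
    CStarRing.norm_mul_coe_unitary, CStarRing.norm_coe_unitary_mul, l2_opNorm_diagonal]
  simp [Pi.norm_def, Function.comp_def]

lemma IsHermitian.opNorm_eq {A : Matrix (Fin n) (Fin n) ℂ} (hA : A.IsHermitian) :
    opNorm A = ‖hA.eigenvalues‖ := by
  conv_lhs => rw [hA.spectral_theorem]
  exact opNorm_conjStarAlgAut_diagonal _ _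

lemma PosDef.opNorm_inv_eq {A : Matrix (Fin n) (Fin n) ℂ} (hA : A.PosDef) :
    opNorm A⁻¹ = ‖fun i => (hA.1.eigenvalues i)⁻¹‖ := by
  rw [hA.inv_eq_conjStarAlgAut]
  exact opNorm_conjStarAlgAut_diagonal _ _

end Matrix

lemma two_le_add_inv {x : ℝ} (hx : 0 < x) : 2 ≤ x + x⁻¹ := by
  nlinarith [sq_nonneg (x - 1), mul_inv_cancel₀ hx.ne', inv_pos.2 hx]

lemma le_add_sqrt_of_add_inv_le {t x : ℝ} (hx : 0 < x) (h : x + x⁻¹ ≤ 2 * t) :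
    x ≤ t + √(t ^ 2 - 1) := by
  have hsq : (x - t) ^ 2 ≤ t ^ 2 - 1 := by
    nlinarith [mul_le_mul_of_nonneg_left h hx.le, mul_inv_cancel₀ hx.ne']
  linarith [le_abs_self (x - t), Real.abs_le_sqrt hsq]

section Normalization

variable {n : ℕ} {B : Matrix (Fin n) (Fin n) ℂ}

lemma Matrix.PosDef.ofReal_re_diag (hB : B.PosDef) (i : Fin n) : ((B i i).re : ℂ) = B i i :=
  (Complex.eq_re_of_ofReal_le (Complex.ofReal_zero ▸ hB.diag_pos.le)).symm

lemma Matrix.PosDef.sqrt_re_diag_pos (hB : B.PosDef) (i : Fin n) : 0 < √(B i i).re :=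
  Real.sqrt_pos.2 (Complex.pos_iff.1 hB.diag_pos).1

lemma inv_sqrtDiag (hB : B.PosDef) :
    (sqrtDiag B)⁻¹ = diagonal fun i => (((√(B i i).re)⁻¹ : ℝ) : ℂ) := by
  refine inv_eq_left_inv ?_
  rw [sqrtDiag, diagonal_mul_diagonal, ← diagonal_one]
  congr 1
  funext i
  rw [← Complex.ofReal_mul, inv_mul_cancel₀ (hB.sqrt_re_diag_pos i).ne', Complex.ofReal_one]

lemma hatM_posDef (hB : B.PosDef) : (hatM B).PosDef := by
  have hstar : star (sqrtDiag B)⁻¹ = (sqrtDiag B)⁻¹ := by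
    simp [inv_sqrtDiag hB, star_eq_conjTranspose, diagonal_conjTranspose, Pi.star_def]
  have hunit : IsUnit (sqrtDiag B)⁻¹ := by
    rw [inv_sqrtDiag hB, isUnit_diagonal, Pi.isUnit_iff]
    exact fun i => (Complex.ofReal_ne_zero.2 (inv_pos.2 (hB.sqrt_re_diag_pos i)).ne').isUnit
  unfold hatM
  simpa only [hstar] using (IsUnit.posDef_star_left_conjugate_iff hunit).2 hB

lemma hatM_apply_self (hB : B.PosDef) (i : Fin n) : hatM B i i = 1 := by
  obtain ⟨r, hr, hBr⟩ : ∃ r : ℝ, 0 < r ∧ B i i = r :=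
    ⟨_, (Complex.pos_iff.1 hB.diag_pos).1, (hB.ofReal_re_diag i).symm⟩
  rw [hatM, inv_sqrtDiag hB, mul_diagonal, diagonal_mul, hBr, Complex.ofReal_re]
  norm_cast
  field_simp
  exact (Real.sq_sqrt hr.le).symm

lemma trace_hatM (hB : B.PosDef) : (hatM B).trace = n := by
  simp [trace, hatM_apply_self hB]

lemma gamma_eq_sum_eigenvalues (hB : B.PosDef) :
    Gamma B =
      ∑ i, ((hatM_posDef hB).1.eigenvalues i + ((hatM_posDef hB).1.eigenvalues i)⁻¹ - 2) := by
  have hM := hatM_posDef hB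
  have hsum : ∑ i, hM.1.eigenvalues i = n := by
    have := congrArg Complex.re ((trace_hatM hB).symm.trans hM.1.trace_eq_sum_eigenvalues)
    simpa using this.symm
  have hsum_inv : (hatM B)⁻¹.trace.re = ∑ i, (hM.1.eigenvalues i)⁻¹ := by
    simp [hM.trace_inv]
  rw [Gamma, hsum_inv, Finset.sum_sub_distrib, Finset.sum_add_distrib, hsum]
  simp only [Finset.sum_const, Finset.card_univ, Fintype.card_fin, nsmul_eq_mul]
  ring

end Normalization

/-- For Hermitian positive definite `B`,
`max(‖B̂‖, ‖B̂⁻¹‖) ≤ 1 + Γ(B)/2 + √((1 + Γ(B)/2)² − 1)`. -/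
theorem opNorm_hat_le_of_gamma {n : ℕ} (B : Matrix (Fin n) (Fin n) ℂ) (hB : B.PosDef) :
    max (opNorm (hatM B)) (opNorm ((hatM B)⁻¹)) ≤
      1 + Gamma B / 2 + Real.sqrt ((1 + Gamma B / 2) ^ 2 - 1) := by
  have hM := hatM_posDef hB
  have hΓ := gamma_eq_sum_eigenvalues hB
  set μ := hM.1.eigenvalues
  have hpos : ∀ i, 0 < μ i := hM.eigenvalues_pos
  have hterm : ∀ i, 0 ≤ μ i + (μ i)⁻¹ - 2 := fun i => sub_nonneg.2 (two_le_add_inv (hpos i))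
  have hle : ∀ i, μ i + (μ i)⁻¹ ≤ 2 * (1 + Gamma B / 2) := fun i => by
    linarith [Finset.single_le_sum (fun j _ => hterm j) (Finset.mem_univ i)]
  have hc : 0 ≤ 1 + Gamma B / 2 + √((1 + Gamma B / 2) ^ 2 - 1) := by
    have : 0 ≤ Gamma B := hΓ ▸ Finset.sum_nonneg fun i _ => hterm i
    positivity
  rw [hM.1.opNorm_eq, hM.opNorm_inv_eq]
  refine max_le ((pi_norm_le_iff_of_nonneg hc).2 fun i => ?_)
    ((pi_norm_le_iff_of_nonneg hc).2 fun i => ?_)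
  · rw [Real.norm_of_nonneg (hpos i).le]
    exact le_add_sqrt_of_add_inv_le (hpos i) (hle i)
  · rw [Real.norm_of_nonneg (inv_pos.2 (hpos i)).le]
    exact le_add_sqrt_of_add_inv_le (inv_pos.2 (hpos i)) (by rw [inv_inv, add_comm]; exact hle i)
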